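/- Let $p = 3$ and let $X = \{(\alpha,\beta,\gamma,\delta) \in \mathbb{A}^4 : \alpha^2\beta + \gamma^3 = 0,\ \delta^3 - \alpha\beta^2 = 0\}$ over an algebraically closed field of characteristic $3$. Then $X$ is an irreducible conical closed subvariety of $\mathbb{A}^4$. -/

import Mathlib

open scoped TensorProduct

namespace Paper

/-- A restricted Lie algebra structure (`p`-map) on a Lie algebra `L` over `K`:
a `p`-operation satisfying `(a • x)^{[p]} = a^p • x^{[p]}`, `ad (x^{[p]}) = (ad x)^p`,
and Jacobson's formula, recorded here through the fact that
`(x+y)^{[p]} - x^{[p]} - y^{[p]}` is a sum of the Jacobson terms `s_i(x,y)`, which lie in the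
`p`-th term of the lower central series of the subalgebra generated by `x` and `y`. -/
class PStructure (p : ℕ) (K : Type) (L : Type) [Field K] [LieRing L] [LieAlgebra K L] :
    Type where
  pMap : L → L
  smul_pMap : ∀ (a : K) (x : L), pMap (a • x) = a ^ p • pMap x
  ad_pMap : ∀ x : L, LieAlgebra.ad K L (pMap x) = LieAlgebra.ad K L x ^ p
  jacobson_mem : ∀ x y : L,
    pMap (x + y) - pMap x - pMap y ∈
      Submodule.map (LieSubalgebra.lieSpan K L {x, y}).incl.toLinearMap
        (LieModule.lowerCentralSeries K ↥(LieSubalgebra.lieSpan K L {x, y})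
          ↥(LieSubalgebra.lieSpan K L {x, y}) (p - 1)).toSubmodule

section Basic

variable (p : ℕ) (K L : Type) [Field K] [LieRing L] [LieAlgebra K L] [PStructure p K L]

/-- The `p`-map of a restricted Lie algebra. -/
def pmap (x : L) : L := PStructure.pMap (p := p) (K := K) x

/-- The nullcone `V(L) = {x | x^{[p]} = 0}`. -/
def nullcone : Set L := {x | pmap p K L x = 0}

/-- A restricted Lie algebra is unipotent if some iterate of the `p`-map vanishes. -/
def IsUnipotent : Prop := ∃ n : ℕ, ∀ x : L, (pmap p K L)^[n] x = 0

/-- A `p`-subalgebra: a Lie subalgebra closed under the `p`-map. -/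
def IsPSubalgebra (S : LieSubalgebra K L) : Prop := ∀ x ∈ S, pmap p K L x ∈ S

/-- `E(2,L)`: two-dimensional elementary abelian `p`-subalgebras, viewed as subspaces. -/
def E2 : Set (Submodule K L) :=
  {e | Module.finrank K ↥e = 2 ∧ (∀ x ∈ e, ∀ y ∈ e, ⁅x, y⁆ = (0 : L)) ∧
    ∀ x ∈ e, pmap p K L x = 0}

/-- The elementary abelian `2`-planes lying inside a given subalgebra. -/
def E2in (S : LieSubalgebra K L) : Set (Submodule K L) :=
  {e ∈ E2 p K L | e ≤ S.toSubmodule}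

/-- `Max_p(L)`: maximal proper `p`-subalgebras containing some elementary abelian `2`-plane. -/
def MaxP : Set (LieSubalgebra K L) :=
  {m | IsPSubalgebra p K L m ∧ m ≠ ⊤ ∧
    (∀ m' : LieSubalgebra K L, IsPSubalgebra p K L m' → m' ≠ ⊤ → m ≤ m' → m = m') ∧
    (E2in p K L m).Nonempty}

/-- The cyclic `p`-subalgebra `(K z)_p` generated by one element. -/
def cyclicSpan (z : L) : Submodule K L :=
  Submodule.span K (Set.range fun j : ℕ => (pmap p K L)^[j] z)

end Basic

section Zariski

variable (K V : Type) [Field K] [AddCommGroup V] [Module K V]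

/-- The algebra of polynomial functions on a vector space: the subalgebra of functions
generated by the linear forms. -/
def polyFunctions : Subalgebra K (V → K) :=
  Algebra.adjoin K (Set.range fun φ : Module.Dual K V => (φ : V → K))

/-- Zariski-closed subsets: common zero sets of families of polynomial functions. -/
def IsZariskiClosed (s : Set V) : Prop :=
  ∃ S : Set (V → K), S ⊆ (polyFunctions K V : Set (V → K)) ∧ s = {v : V | ∀ f ∈ S, f v = 0}

/-- The Zariski topology on a vector space. -/
def zariskiTopology : TopologicalSpace V :=
  TopologicalSpace.generateFrom {s : Set V | IsZariskiClosed K V sᶜ}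

/-- The topology on the set of subspaces of `V` (in particular on Grassmannians of `2`-planes),
coinduced by the span map from the (Zariski-topologized) space of linearly independent pairs. -/
def planeTopology : TopologicalSpace (Submodule K V) :=
  TopologicalSpace.coinduced
    (fun q : {q : V × V // LinearIndependent K ![q.1, q.2]} =>
      Submodule.span K {q.val.1, q.val.2})
    (TopologicalSpace.induced Subtype.val (zariskiTopology K (V × V)))

end Zariski

end Paper
namespace Paper

section U0

attribute [local instance 100] LieRing.ofAssociativeRing

variable (p : ℕ) (K L : Type) [Field K] [LieRing L] [LieAlgebra K L] [PStructure p K L]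

/-- The defining relations of the restricted enveloping algebra: `x^p = x^{[p]}`. -/
inductive U0Rel : UniversalEnvelopingAlgebra K L → UniversalEnvelopingAlgebra K L → Prop
  | rel (x : L) : U0Rel (UniversalEnvelopingAlgebra.ι K x ^ p)
      (UniversalEnvelopingAlgebra.ι K (pmap p K L x))

/-- The restricted enveloping algebra `U₀(L)`. -/
def U0 : Type := RingQuot (U0Rel p K L)

noncomputable instance : Ring (U0 p K L) := inferInstanceAs (Ring (RingQuot _))
noncomputable instance : Algebra K (U0 p K L) := inferInstanceAs (Algebra K (RingQuot _))

/-- The canonical map `L → U₀(L)`. -/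
noncomputable def u0ι : L →ₗ[K] U0 p K L :=
  ((RingQuot.mkAlgHom K (U0Rel p K L)).toLinearMap).comp
    (UniversalEnvelopingAlgebra.ι (R := K) (L := L)).toLinearMap

variable {p K L}

lemma u0ι_lie (x y : L) :
    u0ι p K L ⁅x, y⁆ = u0ι p K L x * u0ι p K L y - u0ι p K L y * u0ι p K L x := by
  have h : UniversalEnvelopingAlgebra.ι (R := K) ⁅x, y⁆
      = UniversalEnvelopingAlgebra.ι (R := K) x * UniversalEnvelopingAlgebra.ι (R := K) y
        - UniversalEnvelopingAlgebra.ι (R := K) y * UniversalEnvelopingAlgebra.ι (R := K) x := by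
    rw [LieHom.map_lie, Ring.lie_def]
  have e : ∀ z : L, u0ι p K L z
      = RingQuot.mkAlgHom K (U0Rel p K L) (UniversalEnvelopingAlgebra.ι K z) := fun z => rfl
  rw [e, e, e, h, map_sub, map_mul, map_mul] <;> rfl

/-- `U₀(L)` is a Lie module over `L` via left multiplication. -/
noncomputable instance : LieRingModule L (U0 p K L) where
  bracket x u := u0ι p K L x * u
  add_lie x y u := by
    show u0ι p K L (x + y) * u = u0ι p K L x * u + u0ι p K L y * u
    rw [map_add, add_mul]
  lie_add x u v := by
    show u0ι p K L x * (u + v) = u0ι p K L x * u + u0ι p K L x * v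
    rw [mul_add]
  leibniz_lie x y u := by
    show u0ι p K L x * (u0ι p K L y * u)
      = u0ι p K L ⁅x, y⁆ * u + u0ι p K L y * (u0ι p K L x * u)
    rw [u0ι_lie, sub_mul, mul_assoc, mul_assoc, sub_add_cancel]

noncomputable instance : LieModule K L (U0 p K L) where
  smul_lie t x u := by
    show u0ι p K L (t • x) * u = t • (u0ι p K L x * u)
    rw [map_smul, smul_mul_assoc]
  lie_smul t x u := by
    show u0ι p K L x * t • u = t • (u0ι p K L x * u)
    rw [mul_smul_comm]

end U0

section Modules

variable (p : ℕ) (K L : Type) [Field K] [LieRing L] [LieAlgebra K L] [PStructure p K L]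

/-- Pi types of Lie modules are Lie modules. -/
instance piLieRingModule {ι : Type} {M : ι → Type} [∀ i, AddCommGroup (M i)]
    [∀ i, LieRingModule L (M i)] : LieRingModule L (∀ i, M i) where
  bracket x f := fun i => ⁅x, f i⁆
  add_lie x y f := by funext i; exact add_lie x y (f i)
  lie_add x f g := by funext i; exact lie_add x (f i) (g i)
  leibniz_lie x y f := by funext i; exact leibniz_lie x y (f i)

instance piLieModule {ι : Type} {M : ι → Type} [∀ i, AddCommGroup (M i)] [∀ i, Module K (M i)]
    [∀ i, LieRingModule L (M i)] [∀ i, LieModule K L (M i)] : LieModule K L (∀ i, M i) where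
  smul_lie t x f := by funext i; exact smul_lie t x (f i)
  lie_smul t x f := by funext i; exact lie_smul t x (f i)

/-- Products of Lie modules are Lie modules. -/
instance prodLieRingModule {M N : Type} [AddCommGroup M] [AddCommGroup N]
    [LieRingModule L M] [LieRingModule L N] : LieRingModule L (M × N) where
  bracket x q := (⁅x, q.1⁆, ⁅x, q.2⁆)
  add_lie x y q := by ext <;> simp [add_lie]
  lie_add x q r := by ext <;> simp [lie_add]
  leibniz_lie x y q := by ext <;> simp

instance prodLieModule {M N : Type} [AddCommGroup M] [AddCommGroup N] [Module K M] [Module K N]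
    [LieRingModule L M] [LieRingModule L N] [LieModule K L M] [LieModule K L N] :
    LieModule K L (M × N) where
  smul_lie t x q := by
    refine Prod.ext ?_ ?_
    · exact smul_lie t x q.1
    · exact smul_lie t x q.2
  lie_smul t x q := by
    refine Prod.ext ?_ ?_
    · exact lie_smul t x q.1
    · exact lie_smul t x q.2

/-- A Lie module is restricted if the `p`-map acts as the `p`-th power of the action. -/
def IsRestrictedModule (M : Type) [AddCommGroup M] [Module K M] [LieRingModule L M]
    [LieModule K L M] : Prop :=
  ∀ x : L, LieModule.toEnd K L M (pmap p K L x) = LieModule.toEnd K L M x ^ p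

/-- A module is projective over `U₀(L)` iff it is a direct summand of a finite free module. -/
def IsProjectiveMod (P : Type) [AddCommGroup P] [Module K P] [LieRingModule L P]
    [LieModule K L P] : Prop :=
  ∃ (n : ℕ) (i : P →ₗ⁅K,L⁆ (Fin n → U0 p K L)) (r : (Fin n → U0 p K L) →ₗ⁅K,L⁆ P),
    r.comp i = LieModuleHom.id

/-- `M` is (up to iso) the kernel of a surjection from a free `U₀(L)`-module onto `N`;
such kernels compute the Heller shift `Ω(N)` up to projective direct summands. -/
def IsSyzygyStep (N : Type) [AddCommGroup N] [Module K N] [LieRingModule L N] [LieModule K L N]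
    (M : Type) [AddCommGroup M] [Module K M] [LieRingModule L M] [LieModule K L M] : Prop :=
  ∃ (n : ℕ) (f : (Fin n → U0 p K L) →ₗ⁅K,L⁆ N), Function.Surjective f ∧
    Nonempty (M ≃ₗ⁅K,L⁆ ↥(LieModuleHom.ker f))

end Modules

end Paper
namespace Paper

section Heller

variable (p : ℕ) (K L : Type) [Field K] [LieRing L] [LieAlgebra K L] [PStructure p K L]

/-- `M` is (up to iso) an `n`-th syzygy of `N` over `U₀(L)`, computed by iterated
kernels of surjections from free modules. -/
def IsNthSyzygy : (n : ℕ) → (N : Type) → [AddCommGroup N] → [Module K N] →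
    [LieRingModule L N] → [LieModule K L N] → (M : Type) → [AddCommGroup M] → [Module K M] →
    [LieRingModule L M] → [LieModule K L M] → Prop
  | 0, N, _, _, _, _, M, _, _, _, _ => Nonempty (M ≃ₗ⁅K,L⁆ N)
  | n + 1, N, _, _, _, _, M, _, _, _, _ =>
    ∃ (X : Type) (_ : AddCommGroup X) (_ : Module K X) (_ : LieRingModule L X)
      (_ : LieModule K L X), IsSyzygyStep p K L N X ∧ IsNthSyzygy n X M

/-- Stable isomorphism: isomorphism after adding projective direct summands. -/
def StablyIso (M : Type) [AddCommGroup M] [Module K M] [LieRingModule L M] [LieModule K L M]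
    (N : Type) [AddCommGroup N] [Module K N] [LieRingModule L N] [LieModule K L N] : Prop :=
  ∃ (P Q : Type) (_ : AddCommGroup P) (_ : Module K P) (_ : LieRingModule L P)
    (_ : LieModule K L P) (_ : AddCommGroup Q) (_ : Module K Q) (_ : LieRingModule L Q)
    (_ : LieModule K L Q), IsProjectiveMod p K L P ∧ IsProjectiveMod p K L Q ∧
      Nonempty ((M × P) ≃ₗ⁅K,L⁆ (N × Q))

/-- `M ≅ (n-th syzygy of N) ⊕ (projective)`. -/
def StablyNthSyzygy (n : ℕ) (N : Type) [AddCommGroup N] [Module K N] [LieRingModule L N]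
    [LieModule K L N] (M : Type) [AddCommGroup M] [Module K M] [LieRingModule L M]
    [LieModule K L M] : Prop :=
  ∃ (X : Type) (_ : AddCommGroup X) (_ : Module K X) (_ : LieRingModule L X)
    (_ : LieModule K L X), IsNthSyzygy p K L n N X ∧ StablyIso p K L M X

/-- `M ≅ Ω^z(N) ⊕ (projective)` for `z : ℤ`; for negative `z` this is expressed by the
(equivalent) condition that `N` is stably the `(-z)`-th syzygy of `M`. -/
def IsStableHeller (z : ℤ) (N : Type) [AddCommGroup N] [Module K N] [LieRingModule L N]
    [LieModule K L N] (M : Type) [AddCommGroup M] [Module K M] [LieRingModule L M]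
    [LieModule K L M] : Prop :=
  ∃ n : ℕ, (z = (n : ℤ) ∧ StablyNthSyzygy p K L n N M) ∨
    (z = -(n : ℤ) ∧ StablyNthSyzygy p K L n M N)

end Heller

section Char

variable (p : ℕ) (K L : Type) [Field K] [LieRing L] [LieAlgebra K L] [PStructure p K L]

/-- A character of the restricted Lie algebra, i.e. an algebra homomorphism `U₀(L) → K`:
equivalently, a linear form vanishing on brackets and compatible with the `p`-map. -/
structure PCharacter : Type where
  toLinear : L →ₗ[K] K
  map_lie' : ∀ x y : L, toLinear ⁅x, y⁆ = 0
  map_pmap' : ∀ x : L, toLinear (pmap p K L x) = toLinear x ^ p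

end Char

section CharMod

variable {p : ℕ} {K L : Type} [Field K] [LieRing L] [LieAlgebra K L] [PStructure p K L]

/-- The one-dimensional module `K_λ` attached to a character `λ`. -/
def CharMod (_lam : PCharacter p K L) : Type := K

namespace CharMod

instance (lam : PCharacter p K L) : AddCommGroup (CharMod lam) :=
  inferInstanceAs (AddCommGroup K)

instance (lam : PCharacter p K L) : Module K (CharMod lam) := inferInstanceAs (Module K K)

instance (lam : PCharacter p K L) : LieRingModule L (CharMod lam) where
  bracket x a := lam.toLinear x • a
  add_lie x y a := by
    show lam.toLinear (x + y) • a = lam.toLinear x • a + lam.toLinear y • a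
    rw [map_add, add_smul]
  lie_add x a b := by
    show lam.toLinear x • (a + b) = lam.toLinear x • a + lam.toLinear x • b
    rw [smul_add]
  leibniz_lie x y a := by
    show lam.toLinear x • lam.toLinear y • a
      = lam.toLinear ⁅x, y⁆ • a + lam.toLinear y • lam.toLinear x • a
    rw [lam.map_lie', zero_smul, zero_add, smul_comm]

instance (lam : PCharacter p K L) : LieModule K L (CharMod lam) where
  smul_lie t x a := by
    show lam.toLinear (t • x) • a = t • lam.toLinear x • a
    rw [map_smul, smul_assoc]
  lie_smul t x a := by
    show lam.toLinear x • t • a = t • lam.toLinear x • a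
    rw [smul_comm]

end CharMod

end CharMod

section Char2

variable (p : ℕ) (K L : Type) [Field K] [LieRing L] [LieAlgebra K L] [PStructure p K L]

/-- The trivial (zero) character. -/
def trivChar (hp : p ≠ 0) : PCharacter p K L where
  toLinear := 0
  map_lie' := by intro x y; simp
  map_pmap' := by intro x; simp [zero_pow hp]

/-- An endotrivial module: `M ⊗ M* ≅ K ⊕ (projective)` over `U₀(L)`. -/
def IsEndotrivial (hp : p ≠ 0) (M : Type) [AddCommGroup M] [Module K M] [LieRingModule L M]
    [LieModule K L M] : Prop :=
  ∃ (P : Type) (_ : AddCommGroup P) (_ : Module K P) (_ : LieRingModule L P)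
    (_ : LieModule K L P), IsProjectiveMod p K L P ∧
      Nonempty ((M ⊗[K] Module.Dual K M) ≃ₗ⁅K,L⁆ ((CharMod (trivChar p K L hp)) × P))

end Char2

end Paper
namespace Paper

section Counit

attribute [local instance 100] LieRing.ofAssociativeRing

variable (p : ℕ) (K L : Type) [Field K] [LieRing L] [LieAlgebra K L] [PStructure p K L]

/-- The zero Lie algebra homomorphism `L → K`. -/
def zeroLieHom : L →ₗ⁅K⁆ K :=
  { (0 : L →ₗ[K] K) with map_lie' := by intro x y; simp }

/-- The counit (augmentation) `ε : U₀(L) → K`. -/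
noncomputable def counit (hp : p ≠ 0) : U0 p K L →ₐ[K] K :=
  RingQuot.liftAlgHom K ⟨UniversalEnvelopingAlgebra.lift K (zeroLieHom K L), by
    rintro x y ⟨z⟩
    rw [map_pow, UniversalEnvelopingAlgebra.lift_ι_apply, UniversalEnvelopingAlgebra.lift_ι_apply]
    show (0 : K) ^ p = (0 : K)
    exact zero_pow hp⟩

/-- A minimal step: kernel of a minimal surjection from a free module, i.e. a surjection
whose kernel is contained in `rad · F` (with the radical of `U₀` of a unipotent algebra
given by the augmentation ideal `ker ε`).  This computes the honest Heller shift `Ω(N)`. -/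
def IsMinSyzygyStep (hp : p ≠ 0) (N : Type) [AddCommGroup N] [Module K N] [LieRingModule L N]
    [LieModule K L N] (M : Type) [AddCommGroup M] [Module K M] [LieRingModule L M]
    [LieModule K L M] : Prop :=
  ∃ (n : ℕ) (f : (Fin n → U0 p K L) →ₗ⁅K,L⁆ N), Function.Surjective f ∧
    (LieModuleHom.ker f).toSubmodule ≤ Submodule.restrictScalars K
      ((RingHom.ker (counit p K L hp)) • (⊤ : Submodule (U0 p K L) (Fin n → U0 p K L))) ∧
    Nonempty (M ≃ₗ⁅K,L⁆ ↥(LieModuleHom.ker f))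

/-- `M` is the `n`-th minimal syzygy (Heller shift `Ωⁿ N`) of `N`. -/
def IsMinNthSyzygy (hp : p ≠ 0) : (n : ℕ) → (N : Type) → [AddCommGroup N] → [Module K N] →
    [LieRingModule L N] → [LieModule K L N] → (M : Type) → [AddCommGroup M] → [Module K M] →
    [LieRingModule L M] → [LieModule K L M] → Prop
  | 0, N, _, _, _, _, M, _, _, _, _ => Nonempty (M ≃ₗ⁅K,L⁆ N)
  | n + 1, N, _, _, _, _, M, _, _, _, _ =>
    ∃ (X : Type) (_ : AddCommGroup X) (_ : Module K X) (_ : LieRingModule L X)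
      (_ : LieModule K L X), IsMinSyzygyStep p K L hp N X ∧ IsMinNthSyzygy hp n X M

end Counit

section E2Subalg

variable (p : ℕ) (K L : Type) [Field K] [LieRing L] [LieAlgebra K L] [PStructure p K L]

/-- An elementary abelian plane `e ∈ E(2,L)` as a Lie subalgebra. -/
def E2.subalg (e : Submodule K L) (he : e ∈ E2 p K L) : LieSubalgebra K L :=
  { e with
    lie_mem' := fun {x y} hx hy => Set.mem_of_eq_of_mem (he.2.1 x hx y hy) e.zero_mem }

/-- The restricted structure on an elementary abelian plane: the `p`-map vanishes. -/
def E2.pstruct (e : Submodule K L) (he : e ∈ E2 p K L) (hp : p ≠ 0) :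
    PStructure p K ↥(E2.subalg p K L e he) where
  pMap _ := 0
  smul_pMap a x := by simp
  ad_pMap x := by
    have hx : LieAlgebra.ad K ↥(E2.subalg p K L e he) x = 0 := by
      ext y
      show ((⁅x, y⁆ : ↥(E2.subalg p K L e he)) : L) = ((0 : ↥(E2.subalg p K L e he)) : L)
      rw [LieSubalgebra.coe_bracket, ZeroMemClass.coe_zero]
      exact he.2.1 _ x.2 _ y.2
    rw [hx, zero_pow hp]
    exact (LieAlgebra.ad K ↥(E2.subalg p K L e he)).map_zero
  jacobson_mem x y := by simp

/-- The syzygy function of an endotrivial module: `s_M(e) = s` iff the restriction of `M`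
to `e` is `Ω^s(K) ⊕ (projective)` over `U₀(e)`. -/
def SyzygyFunctionEq (hp : p ≠ 0) (e : Submodule K L) (he : e ∈ E2 p K L) (M : Type)
    [AddCommGroup M] [Module K M] [LieRingModule L M] [LieModule K L M] (s : ℤ) : Prop :=
  letI := E2.pstruct p K L e he hp
  IsStableHeller p K ↥(E2.subalg p K L e he) s
    (CharMod (trivChar p K ↥(E2.subalg p K L e he) hp)) M

/-- The degree function `deg_M(e) = dim M / 𝔎(M|_e)`, where the generic kernel
`𝔎(M|_e) = Σ_{x ∈ ℙ(e)} ker x_M`. -/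
noncomputable def degE (e : Submodule K L) (M : Type) [AddCommGroup M] [Module K M]
    [LieRingModule L M] [LieModule K L M] : ℕ :=
  Module.finrank K M -
    Module.finrank K ↥(⨆ (x : L) (_ : x ∈ e ∧ x ≠ 0),
      LinearMap.ker (LieModule.toEnd K L M x))

end E2Subalg

end Paper

namespace Paper


section Aux

variable {K : Type} [Field K]

lemma coord_mem_polyFunctions (n : ℕ) (i : Fin n) :
    (fun v : Fin n → K => v i) ∈ polyFunctions K (Fin n → K) :=
  Algebra.subset_adjoin ⟨LinearMap.proj i, rfl⟩

lemma dual_apply_eq {n : ℕ} (φ : Module.Dual K (Fin n → K)) (v : Fin n → K) :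
    φ v = ∑ i, v i * φ (Pi.single i (1 : K)) := by
  conv_lhs => rw [← Finset.univ_sum_single v, map_sum]
  refine Finset.sum_congr rfl fun i _ => ?_
  have : Pi.single i (v i) = v i • (Pi.single i (1 : K) : Fin n → K) := by
    funext j
    simp [Pi.single_apply, mul_ite]
  rw [this, map_smul, smul_eq_mul]

lemma polyFunctions_le_range (n : ℕ) :
    polyFunctions K (Fin n → K) ≤
      (MvPolynomial.aeval (fun i : Fin n => (fun v : Fin n → K => v i)) :
        MvPolynomial (Fin n) K →ₐ[K] ((Fin n → K) → K)).range := by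
  apply Algebra.adjoin_le
  rintro _ ⟨φ, rfl⟩
  have hfun : ⇑φ = ∑ i : Fin n, (MvPolynomial.aeval
      (fun i : Fin n => (fun v : Fin n → K => v i))) (MvPolynomial.C (φ (Pi.single i 1)) *
        MvPolynomial.X i) := by
    funext v
    rw [dual_apply_eq φ v, Finset.sum_apply]
    refine Finset.sum_congr rfl fun i _ => ?_
    simp [mul_comm]
  show ⇑φ ∈ _
  rw [hfun]
  exact Subalgebra.sum_mem _ fun i _ => ⟨_, rfl⟩

lemma aeval_coord_apply {n : ℕ} (P : MvPolynomial (Fin n) K) (v : Fin n → K) :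
    (MvPolynomial.aeval (fun i : Fin n => (fun v : Fin n → K => v i)) P) v
      = MvPolynomial.eval v P := by
  have h := MvPolynomial.comp_aeval_apply
    (Pi.evalAlgHom K (fun _ : Fin n → K => K) v) P
    (f := fun i : Fin n => (fun v : Fin n → K => v i))
  have h2 : (MvPolynomial.aeval (fun i : Fin n => v i) :
      MvPolynomial (Fin n) K →ₐ[K] K) P = MvPolynomial.eval v P := by
    rw [MvPolynomial.aeval_def, Algebra.algebraMap_self]
    rfl
  exact h.trans h2

lemma polyFunctions_mul_ne_zero [Infinite K] {n : ℕ} {f g : (Fin n → K) → K}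
    (hf : f ∈ polyFunctions K (Fin n → K)) (hg : g ∈ polyFunctions K (Fin n → K))
    {v w : Fin n → K} (hfv : f v ≠ 0) (hgw : g w ≠ 0) :
    ∃ u, f u * g u ≠ 0 := by
  obtain ⟨P, hP'⟩ := polyFunctions_le_range n hf
  obtain ⟨Q, hQ'⟩ := polyFunctions_le_range n hg
  have hP : (MvPolynomial.aeval (fun i : Fin n => (fun v : Fin n → K => v i)) :
      MvPolynomial (Fin n) K →ₐ[K] ((Fin n → K) → K)) P = f := hP'
  have hQ : (MvPolynomial.aeval (fun i : Fin n => (fun v : Fin n → K => v i)) :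
      MvPolynomial (Fin n) K →ₐ[K] ((Fin n → K) → K)) Q = g := hQ' 
  have hPv : MvPolynomial.eval v P ≠ 0 := by rw [← aeval_coord_apply, hP]; exact hfv
  have hQw : MvPolynomial.eval w Q ≠ 0 := by rw [← aeval_coord_apply, hQ]; exact hgw
  have hPQ : P * Q ≠ 0 :=
    mul_ne_zero (fun h => hPv (by rw [h]; simp)) (fun h => hQw (by rw [h]; simp))
  by_contra hcon
  push_neg at hcon
  apply hPQ
  apply MvPolynomial.funext (q := 0)
  intro u
  have := hcon u
  rw [← hP, ← hQ, aeval_coord_apply, aeval_coord_apply] at this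
  rw [map_mul]
  simpa using this

/-- In the Zariski topology, every point of an open set lies in a basic open set `D(f)`
contained in it. -/
lemma exists_poly_of_isOpen {n : ℕ} {u : Set (Fin n → K)}
    (hu : TopologicalSpace.GenerateOpen
      {s : Set (Fin n → K) | IsZariskiClosed K (Fin n → K) sᶜ} u) {x : Fin n → K} (hx : x ∈ u) :
    ∃ f ∈ polyFunctions K (Fin n → K), f x ≠ 0 ∧ ∀ y, f y ≠ 0 → y ∈ u := by
  induction hu with
  | basic s hs =>
    obtain ⟨S, hS, hzero⟩ := hs
    have hxs : x ∉ sᶜ := fun h => h hx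
    rw [hzero] at hxs
    simp only [Set.mem_setOf_eq, not_forall] at hxs
    obtain ⟨f, hfS, hfx⟩ := hxs
    refine ⟨f, hS hfS, hfx, fun y hy => ?_⟩
    by_contra hys
    have hy' : y ∈ sᶜ := hys
    rw [hzero] at hy'
    exact hy (hy' f hfS)
  | univ => exact ⟨1, Subalgebra.one_mem _, one_ne_zero, fun _ _ => trivial⟩
  | inter s t _ _ ihs iht =>
    obtain ⟨f, hfP, hfx, hfs⟩ := ihs hx.1
    obtain ⟨g, hgP, hgx, hgt⟩ := iht hx.2
    refine ⟨f * g, Subalgebra.mul_mem _ hfP hgP, by simpa using mul_ne_zero hfx hgx, ?_⟩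
    intro y hy
    have hy' : f y * g y ≠ 0 := hy
    exact ⟨hfs y (left_ne_zero_of_mul hy'), hgt y (right_ne_zero_of_mul hy')⟩
  | sUnion S _ ih =>
    obtain ⟨s, hsS, hxs⟩ := hx
    obtain ⟨f, h1, h2, h3⟩ := ih s hsS hxs
    exact ⟨f, h1, h2, fun y hy => ⟨s, hsS, h3 y hy⟩⟩

lemma zariski_preirreducible [Infinite K] (n : ℕ) :
    @IsPreirreducible (Fin n → K) (zariskiTopology K (Fin n → K)) Set.univ := by
  intro u v hu hv ⟨x, _, hxu⟩ ⟨y, _, hyv⟩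
  obtain ⟨f, hfP, hfx, hfu⟩ := exists_poly_of_isOpen hu hxu
  obtain ⟨g, hgP, hgy, hgv⟩ := exists_poly_of_isOpen hv hyv
  obtain ⟨z, hz⟩ := polyFunctions_mul_ne_zero hfP hgP hfx hgy
  exact ⟨z, trivial, hfu z (left_ne_zero_of_mul hz), hgv z (right_ne_zero_of_mul hz)⟩

/-- The parametrization of `X` from the affine plane, given a cube-root function `r`. -/
def phiMap (r : K → K) (w : Fin 2 → K) : Fin 4 → K :=
  ![w 0, w 1, r (-(w 0 ^ 2 * w 1)), r (w 0 * w 1 ^ 2)]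

lemma cube_comp_phi_mem [CharP K 3] (r : K → K) (hr : ∀ a, r a ^ 3 = a)
    {f : (Fin 4 → K) → K} (hf : f ∈ polyFunctions K (Fin 4 → K)) :
    (fun w : Fin 2 → K => f (phiMap r w) ^ 3) ∈ polyFunctions K (Fin 2 → K) := by
  haveI : Fact (Nat.Prime 3) := ⟨by norm_num⟩
  induction hf using Algebra.adjoin_induction with
  | mem f hf =>
    obtain ⟨ℓ, rfl⟩ := hf
    have h0 := coord_mem_polyFunctions (K := K) 2 0
    have h1 := coord_mem_polyFunctions (K := K) 2 1
    have hfun : (fun w : Fin 2 → K => (ℓ (phiMap r w)) ^ 3)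
        = algebraMap K _ (ℓ (Pi.single 0 1) ^ 3) * (fun w : Fin 2 → K => w 0) ^ 3
          + algebraMap K _ (ℓ (Pi.single 1 1) ^ 3) * (fun w : Fin 2 → K => w 1) ^ 3
          + algebraMap K _ (ℓ (Pi.single 2 1) ^ 3) *
              (-((fun w : Fin 2 → K => w 0) ^ 2 * (fun w : Fin 2 → K => w 1)))
          + algebraMap K _ (ℓ (Pi.single 3 1) ^ 3) *
              ((fun w : Fin 2 → K => w 0) * (fun w : Fin 2 → K => w 1) ^ 2) := by
      funext w
      rw [dual_apply_eq ℓ (phiMap r w), sum_pow_char, Fin.sum_univ_four]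
      simp only [Pi.add_apply, Pi.mul_apply, Pi.pow_apply, Pi.neg_apply,
        Pi.algebraMap_apply, Algebra.algebraMap_self, RingHom.id_apply]
      simp only [phiMap, Matrix.cons_val_zero, Matrix.cons_val_one, Matrix.head_cons,
        Matrix.cons_val_two, Matrix.tail_cons, Matrix.cons_val_three]
      rw [mul_pow, mul_pow, mul_pow, mul_pow, hr, hr]
      ring
    rw [hfun]
    refine add_mem (add_mem (add_mem ?_ ?_) ?_) ?_
    · exact mul_mem (Subalgebra.algebraMap_mem _ _) (pow_mem h0 3)
    · exact mul_mem (Subalgebra.algebraMap_mem _ _) (pow_mem h1 3)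
    · exact mul_mem (Subalgebra.algebraMap_mem _ _) (neg_mem (mul_mem (pow_mem h0 2) h1))
    · exact mul_mem (Subalgebra.algebraMap_mem _ _) (mul_mem h0 (pow_mem h1 2))
  | algebraMap a =>
    have : (fun w : Fin 2 → K => (algebraMap K ((Fin 4 → K) → K) a) (phiMap r w) ^ 3)
        = algebraMap K ((Fin 2 → K) → K) (a ^ 3) := by
      funext w
      simp [Pi.algebraMap_apply]
    rw [this]
    exact Subalgebra.algebraMap_mem _ _
  | add f g hf hg ihf ihg =>
    have : (fun w : Fin 2 → K => (f + g) (phiMap r w) ^ 3)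
        = (fun w : Fin 2 → K => f (phiMap r w) ^ 3) + (fun w => g (phiMap r w) ^ 3) := by
      funext w
      simp only [Pi.add_apply]
      apply add_pow_char
    rw [this]; exact add_mem ihf ihg
  | mul f g hf hg ihf ihg =>
    have : (fun w : Fin 2 → K => (f * g) (phiMap r w) ^ 3)
        = (fun w : Fin 2 → K => f (phiMap r w) ^ 3) * (fun w => g (phiMap r w) ^ 3) := by
      funext w
      simp only [Pi.mul_apply]
      exact mul_pow _ _ 3
    rw [this]; exact mul_mem ihf ihg

lemma phi_continuous [CharP K 3] (r : K → K) (hr : ∀ a, r a ^ 3 = a) :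
    @Continuous _ _ (zariskiTopology K (Fin 2 → K)) (zariskiTopology K (Fin 4 → K))
      (phiMap r) := by
  letI t2 := zariskiTopology K (Fin 2 → K)
  rw [zariskiTopology, zariskiTopology, continuous_generateFrom_iff]
  rintro s ⟨S, hS, hzero⟩
  apply TopologicalSpace.isOpen_generateFrom_of_mem
  refine ⟨(fun f : (Fin 4 → K) → K => fun w => f (phiMap r w) ^ 3) '' S, ?_, ?_⟩
  · rintro _ ⟨f, hf, rfl⟩
    exact cube_comp_phi_mem r hr (hS hf)
  · rw [← Set.preimage_compl, hzero]
    ext w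
    simp only [Set.mem_preimage, Set.mem_setOf_eq, Set.forall_mem_image]
    constructor
    · intro h f hf; rw [h f hf]; exact zero_pow (by norm_num)
    · intro h f hf
      have := h hf
      exact pow_eq_zero_iff (n := 3) (by norm_num) |>.mp this

end Aux

/-- Over an algebraically closed field of characteristic `3`, the set
`X = {(α,β,γ,δ) | α²β + γ³ = 0, δ³ - αβ² = 0} ⊆ 𝔸⁴` is an irreducible conical closed
subvariety. -/
theorem statement11 (K : Type) [Field K] [IsAlgClosed K] [CharP K 3] :
    IsZariskiClosed K (Fin 4 → K)
      {v : Fin 4 → K | v 0 ^ 2 * v 1 + v 2 ^ 3 = 0 ∧ v 3 ^ 3 - v 0 * v 1 ^ 2 = 0} ∧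
    (∀ (c : K) (v : Fin 4 → K),
      v ∈ {v : Fin 4 → K | v 0 ^ 2 * v 1 + v 2 ^ 3 = 0 ∧ v 3 ^ 3 - v 0 * v 1 ^ 2 = 0} →
      c • v ∈ {v : Fin 4 → K | v 0 ^ 2 * v 1 + v 2 ^ 3 = 0 ∧ v 3 ^ 3 - v 0 * v 1 ^ 2 = 0}) ∧
    @IsIrreducible _ (zariskiTopology K (Fin 4 → K))
      {v : Fin 4 → K | v 0 ^ 2 * v 1 + v 2 ^ 3 = 0 ∧ v 3 ^ 3 - v 0 * v 1 ^ 2 = 0} := by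
  haveI : Fact (Nat.Prime 3) := ⟨by norm_num⟩
  refine ⟨?_, ?_, ?_⟩
  · -- Zariski closed
    refine ⟨{(fun v : Fin 4 → K => v 0 ^ 2 * v 1 + v 2 ^ 3),
             (fun v : Fin 4 → K => v 3 ^ 3 - v 0 * v 1 ^ 2)}, ?_, ?_⟩
    · rintro f (rfl | rfl)
      · exact add_mem (mul_mem (pow_mem (coord_mem_polyFunctions 4 0) 2)
          (coord_mem_polyFunctions 4 1)) (pow_mem (coord_mem_polyFunctions 4 2) 3)
      · exact sub_mem (pow_mem (coord_mem_polyFunctions 4 3) 3)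
          (mul_mem (coord_mem_polyFunctions 4 0) (pow_mem (coord_mem_polyFunctions 4 1) 2))
    · ext v
      simp only [Set.mem_setOf_eq, Set.mem_insert_iff, Set.mem_singleton_iff,
        forall_eq_or_imp, forall_eq]
  · -- conical
    rintro c v ⟨h1, h2⟩
    constructor
    · simp only [Pi.smul_apply, smul_eq_mul]
      linear_combination (c ^ 3) * h1
    · simp only [Pi.smul_apply, smul_eq_mul]
      linear_combination (c ^ 3) * h2
  · -- irreducible
    letI t4 := zariskiTopology K (Fin 4 → K)
    letI t2 := zariskiTopology K (Fin 2 → K)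
    set r : K → K := fun a => (frobeniusEquiv K 3).symm a with hrdef
    have hr : ∀ a, r a ^ 3 = a := fun a => by
      have h := (frobeniusEquiv K 3).apply_symm_apply a
      rw [frobeniusEquiv_apply, frobenius_def] at h
      exact h
    have hcubeinj : Function.Injective fun a : K => a ^ 3 := fun a b hab => by
      exact frobenius_inj K 3 (by rwa [frobenius_def, frobenius_def])
    have himg : {v : Fin 4 → K | v 0 ^ 2 * v 1 + v 2 ^ 3 = 0 ∧ v 3 ^ 3 - v 0 * v 1 ^ 2 = 0}
        = phiMap r '' Set.univ := by
      rw [Set.image_univ]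
      ext v
      constructor
      · rintro ⟨h1, h2⟩
        refine ⟨![v 0, v 1], ?_⟩
        funext i
        fin_cases i
        · simp [phiMap]
        · simp [phiMap]
        · show r (-((![v 0, v 1] : Fin 2 → K) 0 ^ 2 * (![v 0, v 1] : Fin 2 → K) 1)) = v 2
          apply hcubeinj
          show r (-((![v 0, v 1] : Fin 2 → K) 0 ^ 2 * (![v 0, v 1] : Fin 2 → K) 1)) ^ 3 = v 2 ^ 3
          rw [hr]
          simp only [Matrix.cons_val_zero, Matrix.cons_val_one, Matrix.head_cons]
          linear_combination -h1
        · show r ((![v 0, v 1] : Fin 2 → K) 0 * (![v 0, v 1] : Fin 2 → K) 1 ^ 2) = v 3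
          apply hcubeinj
          show r ((![v 0, v 1] : Fin 2 → K) 0 * (![v 0, v 1] : Fin 2 → K) 1 ^ 2) ^ 3 = v 3 ^ 3
          rw [hr]
          simp only [Matrix.cons_val_zero, Matrix.cons_val_one, Matrix.head_cons]
          linear_combination -h2
      · rintro ⟨w, rfl⟩
        constructor
        · show (phiMap r w) 0 ^ 2 * (phiMap r w) 1 + (phiMap r w) 2 ^ 3 = 0
          simp only [phiMap, Matrix.cons_val_zero, Matrix.cons_val_one, Matrix.head_cons,
            Matrix.cons_val_two, Matrix.tail_cons]
          rw [hr]
          ring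
        · show (phiMap r w) 3 ^ 3 - (phiMap r w) 0 * (phiMap r w) 1 ^ 2 = 0
          simp only [phiMap, Matrix.cons_val_zero, Matrix.cons_val_one, Matrix.head_cons,
            Matrix.cons_val_three, Matrix.tail_cons]
          rw [hr]
          ring
    rw [himg]
    have hirr : @IsIrreducible _ t2 Set.univ :=
      ⟨⟨0, trivial⟩, zariski_preirreducible 2⟩
    exact hirr.image _ ((phi_continuous r hr).continuousOn)

end Paper
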